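/- For the labeled de Bruijn graph G described in the context and the i.i.d. source (Xᵢ) with Xᵢ uniformly distributed on A = {a,b,c,d}, the asymptotic expected Hamming distortion per sample equals D(G) = lim_{n→∞} n⁻¹ E[ min over all directed paths (e₁,…,eₙ) of length n in G of Σ_{i=1}^{n} d(Xᵢ, L(eᵢ)) ] = 452/1809. -/

import Mathlib

/-- Hamming distance on the alphabet `A`. -/
def ham {A : Type*} [DecidableEq A] (x y : A) : ℕ := if x = y then 0 else 1

/-- `EdgeChain src dst n e` : the first `n` edges of the edge sequence `e` form a
directed path in the labelled graph with source map `src` and destination map `dst`. -/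
def EdgeChain {V E : Type*} (src dst : E → V) (n : ℕ) (e : ℕ → E) : Prop :=
  ∀ i : ℕ, i + 1 < n → dst (e i) = src (e (i + 1))

/-- The graph is strongly connected: for any ordered pair of vertices there is a
(nonempty) directed path from the first to the second. -/
def StronglyConnected {V E : Type*} (src dst : E → V) : Prop :=
  ∀ u v : V, ∃ (l : List E) (h : l ≠ []),
    List.Chain' (fun e f => dst e = src f) l ∧ src (l.head h) = u ∧ dst (l.getLast h) = v

/-- The Viterbi transition operator `V` : `Vop src dst lab s x v` is the minimum of
`s (src e) + d(x, lab e)` over all edges `e` ending at `v`. -/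
noncomputable def Vop {V E A : Type*} [DecidableEq A] (src dst : E → V) (lab : E → A)
    (s : V → ℕ) (x : A) : V → ℕ :=
  fun v => sInf {m : ℕ | ∃ e : E, dst e = v ∧ m = s (src e) + ham x (lab e)}

/-- Minimum component of a state. -/
noncomputable def minS {V : Type*} (s : V → ℕ) : ℕ := sInf (Set.range s)

/-- The reduced Viterbi transition operator `Ṽ`: subtract from `V(s,x)` its minimum
component. -/
noncomputable def Vred {V E A : Type*} [DecidableEq A] (src dst : E → V) (lab : E → A)
    (s : V → ℕ) (x : A) : V → ℕ :=
  fun v => Vop src dst lab s x v - minS (Vop src dst lab s x)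

/-- The Viterbi state sequence: `S⁰` is the zero state and `Sⁱ = V(S^{i-1}, xᵢ)`
(the letter `xᵢ` of the paper is `x (i-1)` here). -/
noncomputable def VSeq {V E A : Type*} [DecidableEq A] (src dst : E → V) (lab : E → A)
    (x : ℕ → A) : ℕ → V → ℕ
  | 0 => fun _ => 0
  | i + 1 => Vop src dst lab (VSeq src dst lab x i) (x i)

/-- The reduced Viterbi state sequence `S̃ⁱ(v) = Sⁱ(v) - min Sⁱ`. -/
noncomputable def SredSeq {V E A : Type*} [DecidableEq A] (src dst : E → V) (lab : E → A)
    (x : ℕ → A) (i : ℕ) : V → ℕ :=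
  fun v => VSeq src dst lab x i v - minS (VSeq src dst lab x i)

/-- The state space `𝒮_G`: the zero state together with everything obtainable from it
by finitely many applications of the reduced Viterbi transition operator. -/
def SG {V E A : Type*} [DecidableEq A] (src dst : E → V) (lab : E → A) : Set (V → ℕ) :=
  { s | ∃ l : List A, s = l.foldl (Vred src dst lab) (fun _ => 0) }

/-- `PrimIndex src dst k` : `k` is positive and any vertex can be reached from any
vertex by a directed path of length exactly `k`. -/
def PrimIndex {V E : Type*} (src dst : E → V) (k : ℕ) : Prop :=
  0 < k ∧ ∀ u v : V, ∃ e : ℕ → E,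
    EdgeChain src dst k e ∧ src (e 0) = u ∧ dst (e (k - 1)) = v

/-- Minimum total Hamming distortion over all directed paths of length `n`. -/
noncomputable def minDist {V E A : Type*} [DecidableEq A] (src dst : E → V) (lab : E → A)
    (n : ℕ) (x : Fin n → A) : ℕ :=
  sInf {m : ℕ | ∃ e : ℕ → E, EdgeChain src dst n e ∧
    m = ∑ i : Fin n, ham (x i) (lab (e i.1))}

/-- `aSeq src dst lab p n` is the expected minimum path distortion
`a_n = E[ min_{paths} Σ d(Xᵢ, L(eᵢ)) ]` for the i.i.d. source with letter distribution `p`. -/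
noncomputable def aSeq {V E A : Type*} [DecidableEq A] [Fintype A] (src dst : E → V)
    (lab : E → A) (p : A → ℝ) (n : ℕ) : ℝ :=
  ∑ x : Fin n → A, (∏ i, p (x i)) * (minDist src dst lab n x : ℝ)

/-- Source map of the labelled de Bruijn graph of size 8: edge `(v, j)` (for `j = 0, 1`)
is the `j`-th outgoing edge of vertex `v` (vertices `v₁,…,v₈` are `0,…,7`). -/
def dbSrc : Fin 8 × Fin 2 → Fin 8 := fun e => e.1

/-- Destination map of the de Bruijn graph: edge `(v, j)` goes to vertex `2v + j (mod 8)`,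
i.e. `v₁ → v₁,v₂`, `v₂ → v₃,v₄`, `v₃ → v₅,v₆`, `v₄ → v₇,v₈`, `v₅ → v₁,v₂`,
`v₆ → v₃,v₄`, `v₇ → v₅,v₆`, `v₈ → v₇,v₈`. -/
def dbDst : Fin 8 × Fin 2 → Fin 8 :=
  fun e => ⟨(2 * e.1.1 + e.2.1) % 8, Nat.mod_lt _ (by norm_num)⟩

/-- Labels of the de Bruijn graph: the alphabet `A = {a,b,c,d}` is `Fin 4` with
`a = 0`, `b = 1`, `c = 2`, `d = 3`; row `v` lists the labels of the two outgoing
edges of vertex `v`. -/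
def dbLab : Fin 8 × Fin 2 → Fin 4 :=
  fun e => ![![0, 1], ![1, 0], ![2, 3], ![3, 2], ![1, 0], ![0, 1], ![3, 2], ![2, 3]] e.1 e.2

/-!
The minimal distortion of a word is the minimum of its final Viterbi state. Subtracting that
minimum at every step shows that it is the cost accumulated along the word by the automaton on
reduced Viterbi states `Ṽ` whose step cost is `min V(s, x)`. For the de Bruijn graph only 107
reduced states are reachable from the zero state, and on them the Poisson equation
`h s + 452/1809 = 𝔼[min V(s, X) + h (Ṽ(s, X))]` has a solution with `0 ≤ h ≤ 1`. Hence the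
expected cost of `n` letters is `452 n / 1809 + O(1)`.
-/

open Filter Topology Finset Function

section RunCost

variable {S A M : Type*}

def runCost [Zero M] [Add M] (T : S → A → S) (g : S → A → M) : S → List A → M
  | _, [] => 0
  | s, a :: l => g s a + runCost T g (T s a) l

theorem Nat.cast_runCost {R : Type*} [AddMonoidWithOne R] (T : S → A → S) (g : S → A → ℕ)
    (s : S) (l : List A) :
    ((runCost T g s l : ℕ) : R) = runCost T (fun s a => (g s a : R)) s l := by
  induction l generalizing s with
  | nil => simp [runCost]
  | cons a l ih => simp [runCost, ih]

variable [Fintype A] (p : A → ℝ) (T : S → A → S) (g : S → A → ℝ)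

noncomputable def expectedRunCost (n : ℕ) (s : S) : ℝ :=
  ∑ x : Fin n → A, (∏ i, p (x i)) * runCost T g s (List.ofFn x)

@[simp]
theorem expectedRunCost_zero (s : S) : expectedRunCost p T g 0 s = 0 := by
  simp [expectedRunCost, runCost]

theorem expectedRunCost_succ (hp : ∑ a, p a = 1) (n : ℕ) (s : S) :
    expectedRunCost p T g (n + 1) s =
      ∑ a, p a * (g s a + expectedRunCost p T g n (T s a)) := by
  have hmass : ∑ y : Fin n → A, ∏ i, p (y i) = 1 := by
    rw [← Fintype.sum_pow, hp, one_pow]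
  rw [expectedRunCost, ← (Fin.consEquiv fun _ => A).sum_comp, Fintype.sum_prod_type]
  refine sum_congr rfl fun a _ => ?_
  simp only [Fin.consEquiv_apply, Fin.prod_univ_succ, List.ofFn_succ, Fin.cons_zero,
    Fin.cons_succ, runCost]
  have hsplit (y : Fin n → A) :
      p a * (∏ i, p (y i)) * (g s a + runCost T g (T s a) (List.ofFn y)) =
        p a * g s a * ∏ i, p (y i) +
          p a * ((∏ i, p (y i)) * runCost T g (T s a) (List.ofFn y)) := by
    ring
  rw [sum_congr rfl fun y _ => hsplit y, sum_add_distrib, ← mul_sum, ← mul_sum, hmass,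
    expectedRunCost]
  ring

variable {p T g}

theorem abs_expectedRunCost_sub_le (hp0 : ∀ a, 0 ≤ p a) (hp1 : ∑ a, p a = 1) {P : Set S}
    (hP : ∀ s ∈ P, ∀ a, T s a ∈ P) {h : S → ℝ} {c C : ℝ}
    (hpoisson : ∀ s ∈ P, h s + c = ∑ a, p a * (g s a + h (T s a)))
    (hbdd : ∀ s ∈ P, |h s| ≤ C) (n : ℕ) {s : S} (hs : s ∈ P) :
    |expectedRunCost p T g n s - n * c - h s| ≤ C := by
  induction n generalizing s with
  | zero => simpa using hbdd s hs
  | succ n ih =>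
    set d : A → ℝ := fun a => expectedRunCost p T g n (T s a) - n * c - h (T s a)
    have hd : expectedRunCost p T g (n + 1) s - (n + 1 : ℕ) * c - h s = ∑ a, p a * d a := by
      have hsplit : ∑ a, p a * d a = ∑ a, p a * (g s a + expectedRunCost p T g n (T s a))
          - ∑ a, p a * (g s a + h (T s a)) - n * c * ∑ a, p a := by
        rw [mul_sum, ← sum_sub_distrib, ← sum_sub_distrib]
        exact sum_congr rfl fun a _ => by ring
      rw [hsplit, expectedRunCost_succ p T g hp1, ← hpoisson s hs, hp1]
      push_cast
      ring
    calc |expectedRunCost p T g (n + 1) s - (n + 1 : ℕ) * c - h s|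
        ≤ ∑ a, |p a * d a| := hd ▸ abs_sum_le_sum_abs _ _
      _ = ∑ a, p a * |d a| := by simp only [abs_mul, abs_of_nonneg (hp0 _)]
      _ ≤ ∑ a, p a * C :=
          sum_le_sum fun a _ => mul_le_mul_of_nonneg_left (ih (hP s hs a)) (hp0 a)
      _ = C := by rw [← sum_mul, hp1, one_mul]

theorem tendsto_expectedRunCost_div (hp0 : ∀ a, 0 ≤ p a) (hp1 : ∑ a, p a = 1) {P : Set S}
    (hP : ∀ s ∈ P, ∀ a, T s a ∈ P) {h : S → ℝ} {c C : ℝ}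
    (hpoisson : ∀ s ∈ P, h s + c = ∑ a, p a * (g s a + h (T s a)))
    (hbdd : ∀ s ∈ P, |h s| ≤ C) {s : S} (hs : s ∈ P) :
    Tendsto (fun n : ℕ => expectedRunCost p T g n s / n) atTop (𝓝 c) := by
  have hdev_le (n : ℕ) : |expectedRunCost p T g n s - n * c| ≤ 2 * C := by
    have h₁ := abs_expectedRunCost_sub_le hp0 hp1 hP hpoisson hbdd n hs
    have h₂ := hbdd s hs
    rw [abs_le] at h₁ h₂ ⊢
    constructor <;> linarith
  have hdev : Tendsto (fun n : ℕ => (expectedRunCost p T g n s - n * c) / n) atTop (𝓝 0) := by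
    refine squeeze_zero_norm (fun n => ?_) (tendsto_const_div_atTop_nhds_zero_nat (2 * C))
    rw [Real.norm_eq_abs, abs_div, Nat.abs_cast]
    exact div_le_div_of_nonneg_right (hdev_le n) n.cast_nonneg
  rw [← zero_add c]
  refine (hdev.add_const c).congr' ?_
  filter_upwards [eventually_ne_atTop 0] with n hn
  field_simp
  ring

end RunCost

section Viterbi

variable {V E A : Type*} [DecidableEq A] {src dst : E → V} {lab : E → A}

theorem EdgeChain.mono {m n : ℕ} {e : ℕ → E} (he : EdgeChain src dst n e) (hmn : m ≤ n) :
    EdgeChain src dst m e :=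
  fun i hi => he i (hi.trans_le hmn)

theorem minS_le (s : V → ℕ) (v : V) : minS s ≤ s v :=
  Nat.sInf_le ⟨v, rfl⟩

theorem exists_eq_minS [Nonempty V] (s : V → ℕ) : ∃ v, s v = minS s :=
  Nat.sInf_mem (Set.range_nonempty s)

theorem minS_add_const [Nonempty V] (s : V → ℕ) (k : ℕ) :
    minS (fun v => s v + k) = minS s + k := by
  obtain ⟨v, hv⟩ := exists_eq_minS s
  obtain ⟨w, hw⟩ := exists_eq_minS fun v => s v + k
  refine le_antisymm ((minS_le _ v).trans_eq (by rw [hv])) ?_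
  rw [← hw]
  exact Nat.add_le_add_right (minS_le s w) k

theorem minS_const [Nonempty V] (k : ℕ) : minS (fun _ : V => k) = k := by
  simp [minS]

theorem minS_sub_minS [Nonempty V] (s : V → ℕ) : minS (fun v => s v - minS s) = 0 := by
  obtain ⟨v, hv⟩ := exists_eq_minS s
  exact Nat.eq_zero_of_le_zero ((minS_le _ v).trans_eq (by rw [hv, Nat.sub_self]))

theorem minS_eq_inf' [Fintype V] [Nonempty V] (s : V → ℕ) :
    minS s = univ.inf' univ_nonempty s :=
  (inf'_univ_eq_ciInf s).symm

variable (src dst lab)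

theorem Vop_apply_dst_le (s : V → ℕ) (x : A) (e : E) :
    Vop src dst lab s x (dst e) ≤ s (src e) + ham x (lab e) :=
  Nat.sInf_le ⟨e, rfl, rfl⟩

theorem exists_Vop_eq {v : V} (hv : ∃ e, dst e = v) (s : V → ℕ) (x : A) :
    ∃ e, dst e = v ∧ Vop src dst lab s x v = s (src e) + ham x (lab e) := by
  obtain ⟨e, he⟩ := hv
  have hne : {m | ∃ e, dst e = v ∧ m = s (src e) + ham x (lab e)}.Nonempty :=
    ⟨_, e, he, rfl⟩
  obtain ⟨e', he', hcost⟩ := Nat.sInf_mem hne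
  exact ⟨e', he', hcost⟩

theorem Vop_add_const (hdst : Surjective dst) (s : V → ℕ) (k : ℕ) (x : A) :
    Vop src dst lab (fun v => s v + k) x = fun v => Vop src dst lab s x v + k := by
  funext v
  obtain ⟨e, rfl, he⟩ := exists_Vop_eq src dst lab (hdst v) s x
  obtain ⟨e', he'v, he'⟩ := exists_Vop_eq src dst lab (hdst (dst e)) (fun v => s v + k) x
  refine le_antisymm ((Vop_apply_dst_le src dst lab _ x e).trans_eq (by rw [he]; ring)) ?_
  rw [he', ← he'v]
  have := Vop_apply_dst_le src dst lab s x e'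
  omega

theorem Vop_eq_Vred_add_minS (s : V → ℕ) (x : A) :
    Vop src dst lab s x = fun v => Vred src dst lab s x v + minS (Vop src dst lab s x) := by
  funext v
  have := minS_le (Vop src dst lab s x) v
  simp only [Vred]
  omega

theorem foldl_Vop_add_const (hdst : Surjective dst) (l : List A) (s : V → ℕ) (k : ℕ) :
    l.foldl (Vop src dst lab) (fun v => s v + k) = fun v => l.foldl (Vop src dst lab) s v + k := by
  induction l generalizing s with
  | nil => rfl
  | cons x l ih => simp only [List.foldl_cons, Vop_add_const src dst lab hdst, ih]

theorem foldl_Vop_eq (hdst : Surjective dst) (l : List A) (s : V → ℕ) :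
    l.foldl (Vop src dst lab) s = fun v => l.foldl (Vred src dst lab) s v +
      runCost (Vred src dst lab) (fun s x => minS (Vop src dst lab s x)) s l := by
  induction l generalizing s with
  | nil => simp [runCost]
  | cons x l ih =>
    conv_lhs => rw [List.foldl_cons, Vop_eq_Vred_add_minS src dst lab s x,
      foldl_Vop_add_const src dst lab hdst, ih]
    simp only [List.foldl_cons, runCost]
    funext v
    ring

theorem minS_foldl_Vred_eq_zero [Nonempty V] (l : List A) {s : V → ℕ} (hs : minS s = 0) :
    minS (l.foldl (Vred src dst lab) s) = 0 := by
  induction l generalizing s with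
  | nil => exact hs
  | cons x l ih => exact ih (minS_sub_minS _)

theorem VSeq_eq_foldl (x : ℕ → A) (n : ℕ) :
    VSeq src dst lab x n = (List.ofFn fun i : Fin n => x i).foldl (Vop src dst lab) fun _ => 0 := by
  induction n with
  | zero => rfl
  | succ n ih =>
    simp only [List.ofFn_succ_last, Fin.val_castSucc, Fin.val_last, List.foldl_concat, ← ih]
    rfl

theorem VSeq_apply_le_sum (x : ℕ → A) {n : ℕ} {e : ℕ → E}
    (he : EdgeChain src dst (n + 1) e) :
    VSeq src dst lab x (n + 1) (dst (e n)) ≤ ∑ i ∈ range (n + 1), ham (x i) (lab (e i)) := by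
  induction n with
  | zero => simpa [VSeq] using Vop_apply_dst_le src dst lab (fun _ => 0) (x 0) (e 0)
  | succ n ih =>
    rw [sum_range_succ, VSeq]
    refine (Vop_apply_dst_le src dst lab _ _ _).trans (Nat.add_le_add_right ?_ _)
    rw [← he n (by omega)]
    exact ih (he.mono (by omega))

theorem exists_edgeChain_sum_eq_VSeq (hdst : Surjective dst) (x : ℕ → A) (n : ℕ) (v : V) :
    ∃ e : ℕ → E, EdgeChain src dst (n + 1) e ∧ dst (e n) = v ∧
      ∑ i ∈ range (n + 1), ham (x i) (lab (e i)) = VSeq src dst lab x (n + 1) v := by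
  induction n generalizing v with
  | zero =>
    obtain ⟨ε, hε, hcost⟩ := exists_Vop_eq src dst lab (hdst v) (fun _ => 0) (x 0)
    exact ⟨fun _ => ε, fun i hi => by omega, hε, by simp [VSeq, hcost]⟩
  | succ n ih =>
    obtain ⟨ε, hε, hcost⟩ :=
      exists_Vop_eq src dst lab (hdst v) (VSeq src dst lab x (n + 1)) (x (n + 1))
    obtain ⟨e, he, hend, hsum⟩ := ih (src ε)
    refine ⟨update e (n + 1) ε, fun i hi => ?_, by simp [hε], ?_⟩
    · rcases (show i + 1 < n + 1 ∨ i = n by omega) with hi | rfl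
      · rw [update_of_ne (by omega), update_of_ne (by omega), he i hi]
      · rw [update_of_ne (by omega), update_self, hend]
    · rw [sum_range_succ, update_self, VSeq, hcost, ← hsum]
      congr 1
      refine sum_congr rfl fun i hi => ?_
      rw [update_of_ne (by simp only [mem_range] at hi; omega)]

theorem minDist_succ_eq_minS_VSeq [Nonempty V] (hdst : Surjective dst) (x : ℕ → A) (n : ℕ) :
    minDist src dst lab (n + 1) (fun i => x i) = minS (VSeq src dst lab x (n + 1)) := by
  have hsum (e : ℕ → E) : ∑ i : Fin (n + 1), ham (x i) (lab (e i)) =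
      ∑ i ∈ range (n + 1), ham (x i) (lab (e i)) :=
    Fin.sum_univ_eq_sum_range (fun i => ham (x i) (lab (e i))) _
  obtain ⟨v, hv⟩ := exists_eq_minS (VSeq src dst lab x (n + 1))
  obtain ⟨e, he, -, hcost⟩ := exists_edgeChain_sum_eq_VSeq src dst lab hdst x n v
  have hmem : minS (VSeq src dst lab x (n + 1)) ∈ {m | ∃ e, EdgeChain src dst (n + 1) e ∧
      m = ∑ i : Fin (n + 1), ham (x i) (lab (e i))} := ⟨e, he, by rw [hsum, hcost, hv]⟩
  refine le_antisymm (Nat.sInf_le hmem) ?_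
  obtain ⟨e', he', hcost'⟩ := Nat.sInf_mem ⟨_, hmem⟩
  rw [minDist, hcost', hsum]
  exact (minS_le _ _).trans (VSeq_apply_le_sum src dst lab x he')

theorem minDist_eq_runCost [Nonempty V] (hdst : Surjective dst) {n : ℕ} (x : Fin n → A) :
    minDist src dst lab n x = runCost (Vred src dst lab)
      (fun s a => minS (Vop src dst lab s a)) (fun _ => 0) (List.ofFn x) := by
  cases n with
  | zero =>
    obtain ⟨e⟩ := hdst.nonempty
    rw [List.ofFn_zero, runCost]
    exact Nat.sInf_eq_zero.2 (Or.inl ⟨fun _ => e, fun i hi => by omega, by simp⟩)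
  | succ n =>
    have hx : (fun i : Fin (n + 1) => x ⟨min i n, by omega⟩) = x :=
      funext fun i => congrArg x (Fin.ext (min_eq_left (Nat.lt_succ_iff.mp i.2)))
    rw [← hx, minDist_succ_eq_minS_VSeq src dst lab hdst (fun i => x ⟨min i n, by omega⟩),
      VSeq_eq_foldl, foldl_Vop_eq src dst lab hdst, minS_add_const,
      minS_foldl_Vred_eq_zero src dst lab _ (minS_const 0), zero_add]

theorem aSeq_eq_expectedRunCost [Nonempty V] [Fintype A] (hdst : Surjective dst) (p : A → ℝ)
    (n : ℕ) : aSeq src dst lab p n = expectedRunCost p (Vred src dst lab)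
      (fun s a => (minS (Vop src dst lab s a) : ℝ)) n fun _ => 0 :=
  sum_congr rfl fun x _ => by rw [minDist_eq_runCost src dst lab hdst, Nat.cast_runCost]

end Viterbi

section DeBruijn

def dbInEdge (v : Fin 8) (k : Fin 2) : Fin 8 × Fin 2 :=
  (⟨v.val / 2 + 4 * k.val, by omega⟩, ⟨v.val % 2, by omega⟩)

theorem dbDst_dbInEdge : ∀ v k, dbDst (dbInEdge v k) = v := by decide

theorem exists_dbInEdge_eq : ∀ e, ∃ k, dbInEdge (dbDst e) k = e := by decide

theorem dbDst_surjective : Surjective dbDst :=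
  fun v => ⟨dbInEdge v 0, dbDst_dbInEdge v 0⟩

def dbVop (s : Fin 8 → ℕ) (x : Fin 4) (v : Fin 8) : ℕ :=
  univ.inf' univ_nonempty fun k => s (dbSrc (dbInEdge v k)) + ham x (dbLab (dbInEdge v k))

def dbVred (s : Fin 8 → ℕ) (x : Fin 4) (v : Fin 8) : ℕ :=
  dbVop s x v - univ.inf' univ_nonempty (dbVop s x)

theorem Vop_deBruijn : Vop dbSrc dbDst dbLab = dbVop := by
  funext s x v
  refine le_antisymm (le_inf' _ _ fun k _ => ?_) ?_
  · simpa only [dbDst_dbInEdge] using Vop_apply_dst_le dbSrc dbDst dbLab s x (dbInEdge v k)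
  · obtain ⟨e, hev, he⟩ := exists_Vop_eq dbSrc dbDst dbLab (dbDst_surjective v) s x
    obtain ⟨k, rfl⟩ : ∃ k, dbInEdge v k = e := hev ▸ exists_dbInEdge_eq e
    rw [he]
    exact inf'_le _ (mem_univ k)

theorem Vred_deBruijn : Vred dbSrc dbDst dbLab = dbVred := by
  funext s x v
  simp only [Vred, Vop_deBruijn, minS_eq_inf', dbVred]

def dbReducedStates : List (Fin 8 → ℕ) :=
  [![0, 0, 0, 0, 0, 0, 0, 0], ![0, 0, 0, 0, 1, 1, 1, 1], ![1, 1, 1, 1, 0, 0, 0, 0],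
   ![0, 1, 1, 0, 1, 1, 1, 1], ![1, 0, 0, 1, 1, 1, 1, 1], ![1, 1, 1, 1, 0, 1, 1, 0],
   ![1, 1, 1, 1, 1, 0, 0, 1], ![0, 1, 1, 1, 2, 2, 1, 1], ![1, 0, 1, 1, 2, 2, 1, 1],
   ![1, 1, 2, 2, 1, 1, 1, 0], ![1, 1, 2, 2, 1, 1, 0, 1], ![1, 1, 1, 0, 1, 1, 2, 2],
   ![1, 1, 0, 1, 1, 1, 2, 2], ![2, 2, 1, 1, 0, 1, 1, 1], ![2, 2, 1, 1, 1, 0, 1, 1],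
   ![0, 1, 2, 1, 2, 2, 2, 2], ![1, 0, 1, 2, 2, 2, 2, 2], ![0, 0, 1, 1, 0, 0, 0, 0],
   ![1, 2, 1, 0, 2, 2, 2, 2], ![2, 1, 0, 1, 2, 2, 2, 2], ![1, 1, 0, 0, 0, 0, 0, 0],
   ![0, 0, 0, 0, 1, 1, 0, 0], ![2, 2, 2, 2, 2, 1, 0, 1], ![2, 2, 2, 2, 1, 2, 1, 0],
   ![0, 0, 0, 0, 0, 0, 1, 1], ![2, 2, 2, 2, 1, 0, 1, 2], ![2, 2, 2, 2, 0, 1, 2, 1],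
   ![0, 1, 2, 1, 3, 3, 2, 2], ![1, 0, 1, 2, 3, 3, 2, 2], ![0, 0, 1, 1, 1, 1, 1, 0],
   ![0, 0, 1, 1, 1, 1, 0, 1], ![1, 2, 1, 0, 2, 2, 3, 3], ![2, 1, 0, 1, 2, 2, 3, 3],
   ![1, 1, 0, 0, 0, 1, 1, 1], ![1, 1, 0, 0, 1, 0, 1, 1], ![0, 1, 1, 1, 1, 1, 0, 0],
   ![1, 0, 1, 1, 1, 1, 0, 0], ![2, 2, 3, 3, 1, 2, 1, 0], ![2, 2, 3, 3, 2, 1, 0, 1],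
   ![1, 1, 1, 0, 0, 0, 1, 1], ![1, 1, 0, 1, 0, 0, 1, 1], ![3, 3, 2, 2, 0, 1, 2, 1],
   ![3, 3, 2, 2, 1, 0, 1, 2], ![0, 1, 1, 0, 2, 2, 1, 1], ![1, 0, 0, 1, 2, 2, 1, 1],
   ![1, 1, 1, 1, 1, 1, 0, 1], ![1, 1, 1, 1, 1, 1, 1, 0], ![0, 1, 1, 0, 1, 1, 2, 2],
   ![1, 0, 0, 1, 1, 1, 2, 2], ![1, 1, 1, 1, 1, 0, 1, 1], ![1, 1, 1, 1, 0, 1, 1, 1],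
   ![1, 0, 1, 1, 1, 1, 1, 1], ![0, 1, 1, 1, 1, 1, 1, 1], ![1, 1, 2, 2, 0, 1, 1, 0],
   ![1, 1, 2, 2, 1, 0, 0, 1], ![1, 1, 0, 1, 1, 1, 1, 1], ![1, 1, 1, 0, 1, 1, 1, 1],
   ![2, 2, 1, 1, 0, 1, 1, 0], ![2, 2, 1, 1, 1, 0, 0, 1], ![0, 1, 2, 1, 2, 2, 1, 1],
   ![1, 0, 1, 2, 2, 2, 1, 1], ![1, 2, 1, 0, 1, 1, 2, 2], ![2, 1, 0, 1, 1, 1, 2, 2],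
   ![2, 2, 2, 2, 1, 0, 1, 1], ![2, 2, 2, 2, 0, 1, 1, 1], ![2, 2, 2, 2, 1, 1, 0, 1],
   ![2, 2, 2, 2, 1, 1, 1, 0], ![1, 1, 2, 2, 1, 2, 1, 0], ![1, 1, 2, 2, 2, 1, 0, 1],
   ![2, 2, 1, 1, 0, 1, 2, 1], ![2, 2, 1, 1, 1, 0, 1, 2], ![1, 1, 0, 1, 2, 2, 2, 2],
   ![1, 1, 1, 0, 2, 2, 2, 2], ![1, 0, 1, 1, 2, 2, 2, 2], ![0, 1, 1, 1, 2, 2, 2, 2],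
   ![0, 0, 1, 1, 1, 0, 0, 0], ![0, 0, 1, 1, 0, 1, 0, 0], ![1, 1, 0, 0, 0, 0, 0, 1],
   ![1, 1, 0, 0, 0, 0, 1, 0], ![0, 0, 0, 1, 1, 1, 0, 0], ![0, 0, 1, 0, 1, 1, 0, 0],
   ![1, 0, 0, 0, 0, 0, 1, 1], ![0, 1, 0, 0, 0, 0, 1, 1], ![1, 1, 0, 0, 1, 0, 0, 1],
   ![1, 1, 0, 0, 0, 1, 1, 0], ![0, 0, 1, 1, 1, 0, 0, 1], ![0, 0, 1, 1, 0, 1, 1, 0],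
   ![1, 0, 0, 1, 0, 0, 1, 1], ![0, 1, 1, 0, 0, 0, 1, 1], ![1, 0, 0, 1, 1, 1, 0, 0],
   ![0, 1, 1, 0, 1, 1, 0, 0], ![0, 1, 0, 0, 1, 1, 1, 1], ![1, 0, 0, 0, 1, 1, 1, 1],
   ![0, 0, 1, 0, 1, 1, 1, 1], ![0, 0, 0, 1, 1, 1, 1, 1], ![1, 1, 1, 1, 0, 0, 1, 0],
   ![1, 1, 1, 1, 0, 0, 0, 1], ![1, 1, 1, 1, 0, 1, 0, 0], ![1, 1, 1, 1, 1, 0, 0, 0],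
   ![2, 2, 1, 1, 0, 0, 1, 0], ![2, 2, 1, 1, 0, 0, 0, 1], ![1, 1, 2, 2, 0, 1, 0, 0],
   ![1, 1, 2, 2, 1, 0, 0, 0], ![0, 1, 0, 0, 1, 1, 2, 2], ![1, 0, 0, 0, 1, 1, 2, 2],
   ![0, 0, 1, 0, 2, 2, 1, 1], ![0, 0, 0, 1, 2, 2, 1, 1]]

-- `1809 h s` for the `s` at the same position of `dbReducedStates`
def dbPotentialTable : List ℕ :=
  [0, 452, 452, 904, 904, 904, 904, 1356, 1356, 1356, 1356, 1356, 1356, 1356, 1356, 1581,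
   1581, 226, 1581, 1581, 226, 226, 1581, 1581, 226, 1581, 1581, 1581, 1581, 676, 676, 1581,
   1581, 676, 676, 676, 676, 1581, 1581, 676, 676, 1581, 1581, 932, 932, 1324, 1324, 932,
   932, 1324, 1324, 1324, 1324, 932, 932, 1324, 1324, 932, 932, 1412, 1412, 1412, 1412, 1517,
   1517, 1517, 1517, 1412, 1412, 1412, 1412, 1517, 1517, 1517, 1517, 338, 338, 338, 338, 338,
   338, 338, 338, 548, 548, 548, 548, 548, 548, 548, 548, 676, 676, 676, 676, 676,
   676, 676, 676, 676, 676, 676, 676, 676, 676, 676, 676]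

def dbPotential (s : Fin 8 → ℕ) : ℕ := dbPotentialTable.getD (dbReducedStates.idxOf s) 0

theorem zero_mem_dbReducedStates : (fun _ => 0) ∈ dbReducedStates := by decide +kernel

theorem dbVred_mem_dbReducedStates :
    ∀ s ∈ dbReducedStates, ∀ x, dbVred s x ∈ dbReducedStates := by decide +kernel

theorem dbPotential_le : ∀ s ∈ dbReducedStates, dbPotential s ≤ 1809 := by decide +kernel

theorem dbPotential_poisson_nat : ∀ s ∈ dbReducedStates, 4 * dbPotential s + 1808 =
    ∑ x, (1809 * univ.inf' univ_nonempty (dbVop s x) + dbPotential (dbVred s x)) := by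
  decide +kernel

theorem dbPotential_poisson {s : Fin 8 → ℕ} (hs : s ∈ dbReducedStates) :
    (dbPotential s / 1809 : ℝ) + 452 / 1809 =
      ∑ x, 1 / 4 * ((minS (Vop dbSrc dbDst dbLab s x) : ℝ) +
        dbPotential (Vred dbSrc dbDst dbLab s x) / 1809) := by
  have h := congrArg (Nat.cast : ℕ → ℝ) (dbPotential_poisson_nat s hs)
  simp only [Vop_deBruijn, Vred_deBruijn, minS_eq_inf', Fin.sum_univ_four] at h ⊢
  simp only [Nat.cast_add, Nat.cast_mul, Nat.cast_ofNat] at h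
  linear_combination h / 7236

end DeBruijn

open Filter in
/-- For the labelled de Bruijn graph of size 8 and the i.i.d. source
uniformly distributed on `A = {a,b,c,d}`, the asymptotic expected Hamming distortion
per sample is `D(G) = lim_{n→∞} a_n / n = 452/1809`. -/
theorem deBruijn_distortion_eq :
    Tendsto (fun n : ℕ => aSeq dbSrc dbDst dbLab (fun _ => (1 / 4 : ℝ)) n / n)
      atTop (nhds (452 / 1809)) := by
  simp_rw [aSeq_eq_expectedRunCost dbSrc dbDst dbLab dbDst_surjective]
  refine tendsto_expectedRunCost_div (fun _ => by norm_num) (by norm_num)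
    (P := {s | s ∈ dbReducedStates}) (h := fun s => dbPotential s / 1809) (C := 1)
    (fun s hs x => ?_) (fun s hs => dbPotential_poisson hs) (fun s hs => ?_)
    zero_mem_dbReducedStates
  · rw [Vred_deBruijn]
    exact dbVred_mem_dbReducedStates s hs x
  · rw [abs_of_nonneg (by positivity), div_le_one (by norm_num)]
    exact_mod_cast dbPotential_le s hs
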